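/- arXiv:1910.03918 — 3 statements merged into one kernel-verified Lean document; each statement's English description precedes it below -/
import Mathlib

section
/- The function d is well-defined and continuous on the set {(γ,ε,μ) ∈ ℝ³ : γ ∈ (0,1], ε ∈ [0,1), μ ∈ (0,1)}. In particular, for every ε ∈ [0,1) and μ ∈ (0,1), d(γ̃,ε̃,μ̃) → d(1,ε,μ) = 1 + (1-ε)·log(1-μ)·(1-μ)/(1-(1-ε)·μ) as (γ̃,ε̃,μ̃) → (1,ε,μ) within the set. -/
noncomputable def betaFn (γ ε μ : ℝ) : ℝ := γ * (1 - (1 - ε) * μ) / (1 - γ * (1 - ε) * μ)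

noncomputable def betaDeriv (γ ε μ : ℝ) : ℝ :=
  -((1 - γ) * γ * (1 - ε)) / (1 - γ * (1 - ε) * μ) ^ 2

noncomputable def dFn (γ ε μ : ℝ) : ℝ :=
  if γ < 1 then
    1 + Real.log (1 - μ) * (1 - μ) * betaDeriv γ ε μ
      / (betaFn γ ε μ * Real.log (betaFn γ ε μ))
  else
    1 + (1 - ε) * Real.log (1 - μ) * (1 - μ) / (1 - (1 - ε) * μ)

noncomputable def dDomain : Set (ℝ × ℝ × ℝ) :=
  {p | p.1 ∈ Set.Ioc (0:ℝ) 1 ∧ p.2.1 ∈ Set.Ico (0:ℝ) 1 ∧ p.2.2 ∈ Set.Ioo (0:ℝ) 1}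

/-!
Since `β' = γ(1-ε)/(1-γ(1-ε)μ) · (β - 1)`, the only singular factor of `d` is
`(β - 1)/(β log β) = 1/(β · dslope log 1 β)`. The difference quotient `dslope log 1` of the
logarithm at `1` is continuous and nonvanishing on `(0, ∞)`, takes the value `log' 1 = 1` at
`β = 1`, and `β = 1` exactly when `γ = 1`; so this expression of `d` is continuous on the domain
and agrees with the separately defined value at `γ = 1`.
-/

open Set Real

lemma dslope_log_one_ne_zero {x : ℝ} (hx : 0 < x) : dslope log 1 x ≠ 0 := by
  rcases eq_or_ne x 1 with rfl | hx1
  · simp [dslope_same]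
  · rw [dslope_of_ne _ hx1, slope_def_field, log_one, sub_zero]
    exact div_ne_zero (log_ne_zero_of_pos_of_ne_one hx hx1) (sub_ne_zero.2 hx1)

lemma continuousOn_dslope_log_one : ContinuousOn (dslope log 1) (Ioi 0) :=
  (continuousOn_dslope (Ioi_mem_nhds one_pos)).2
    ⟨continuousOn_log.mono fun _ hx => ne_of_gt hx, differentiableAt_log one_ne_zero⟩

lemma betaFn_sub_one {γ ε μ : ℝ} (hD : 1 - γ * (1 - ε) * μ ≠ 0) :
    betaFn γ ε μ - 1 = (γ - 1) / (1 - γ * (1 - ε) * μ) := by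
  unfold betaFn
  field_simp
  ring

lemma betaDeriv_eq_mul_betaFn_sub_one {γ ε μ : ℝ} (hD : 1 - γ * (1 - ε) * μ ≠ 0) :
    betaDeriv γ ε μ = γ * (1 - ε) / (1 - γ * (1 - ε) * μ) * (betaFn γ ε μ - 1) := by
  rw [betaFn_sub_one hD]
  unfold betaDeriv
  field_simp
  ring

lemma one_sub_mul_mul_pos {γ ε μ : ℝ} (hγ : γ ∈ Icc 0 1) (hε : ε ∈ Icc 0 1) (hμ : μ < 1) :
    0 < 1 - γ * (1 - ε) * μ := by
  obtain ⟨hγ0, hγ1⟩ := hγ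
  obtain ⟨hε0, hε1⟩ := hε
  have hc0 : 0 ≤ γ * (1 - ε) := mul_nonneg hγ0 (by linarith)
  have hc1 : γ * (1 - ε) ≤ 1 := by nlinarith
  rcases le_or_gt μ 0 with hμ0 | hμ0
  · nlinarith
  · nlinarith

lemma betaFn_pos {γ ε μ : ℝ} (hγ : γ ∈ Ioc 0 1) (hε : ε ∈ Icc 0 1) (hμ : μ < 1) :
    0 < betaFn γ ε μ := by
  have hnum : 0 < 1 - 1 * (1 - ε) * μ := one_sub_mul_mul_pos ⟨zero_le_one, le_rfl⟩ hε hμ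
  rw [one_mul] at hnum
  exact div_pos (mul_pos hγ.1 hnum) (one_sub_mul_mul_pos (Ioc_subset_Icc_self hγ) hε hμ)

lemma dFn_eq_div_dslope_log {γ ε μ : ℝ} (hγ : γ ≤ 1) (hD : 1 - γ * (1 - ε) * μ ≠ 0) :
    dFn γ ε μ = 1 + log (1 - μ) * (1 - μ) * (γ * (1 - ε) / (1 - γ * (1 - ε) * μ))
      / (betaFn γ ε μ * dslope log 1 (betaFn γ ε μ)) := by
  rcases hγ.lt_or_eq with hγ1 | rfl
  · have hβ : betaFn γ ε μ ≠ 1 := by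
      rw [← sub_ne_zero, betaFn_sub_one hD]
      exact div_ne_zero (by linarith) hD
    rw [dFn, if_pos hγ1, betaDeriv_eq_mul_betaFn_sub_one hD, dslope_of_ne _ hβ, slope_def_field,
      log_one, sub_zero]
    field_simp
  · have hβ : betaFn 1 ε μ = 1 := by
      rw [← sub_eq_zero, betaFn_sub_one hD, sub_self, zero_div]
    rw [dFn, if_neg (lt_irrefl 1), hβ, dslope_same]
    simp only [deriv_log, one_mul]
    ring

lemma continuousOn_div_dslope_log :
    ContinuousOn (fun p : ℝ × ℝ × ℝ => 1 + log (1 - p.2.2) * (1 - p.2.2) *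
      (p.1 * (1 - p.2.1) / (1 - p.1 * (1 - p.2.1) * p.2.2))
      / (betaFn p.1 p.2.1 p.2.2 * dslope log 1 (betaFn p.1 p.2.1 p.2.2))) dDomain := by
  have hD : ∀ p ∈ dDomain, 0 < 1 - p.1 * (1 - p.2.1) * p.2.2 := fun p ⟨hγ, hε, hμ⟩ =>
    one_sub_mul_mul_pos (Ioc_subset_Icc_self hγ) (Ico_subset_Icc_self hε) hμ.2
  have hβ : ∀ p ∈ dDomain, 0 < betaFn p.1 p.2.1 p.2.2 := fun p ⟨hγ, hε, hμ⟩ =>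
    betaFn_pos hγ (Ico_subset_Icc_self hε) hμ.2
  have hβcont : ContinuousOn (fun p : ℝ × ℝ × ℝ => betaFn p.1 p.2.1 p.2.2) dDomain :=
    ContinuousOn.div (by fun_prop) (by fun_prop) fun p hp => (hD p hp).ne'
  have hlog : ContinuousOn (fun p : ℝ × ℝ × ℝ => log (1 - p.2.2)) dDomain :=
    ContinuousOn.log (by fun_prop) fun p ⟨_, _, hμ⟩ => by linarith [hμ.2]
  refine continuousOn_const.add (ContinuousOn.div ?_ ?_ fun p hp =>
    mul_ne_zero (hβ p hp).ne' (dslope_log_one_ne_zero (hβ p hp)))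
  · exact (hlog.mul (by fun_prop)).mul
      (ContinuousOn.div (by fun_prop) (by fun_prop) fun p hp => (hD p hp).ne')
  · exact hβcont.mul (continuousOn_dslope_log_one.comp hβcont hβ)

theorem stmt_12 :
    ContinuousOn (fun p : ℝ × ℝ × ℝ => dFn p.1 p.2.1 p.2.2) dDomain ∧
      ∀ ε ∈ Set.Ico (0:ℝ) 1, ∀ μ ∈ Set.Ioo (0:ℝ) 1,
        (dFn 1 ε μ = 1 + (1 - ε) * Real.log (1 - μ) * (1 - μ) / (1 - (1 - ε) * μ)) ∧
        Filter.Tendsto (fun p : ℝ × ℝ × ℝ => dFn p.1 p.2.1 p.2.2)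
          (nhdsWithin (1, ε, μ) dDomain) (nhds (dFn 1 ε μ)) := by
  have hcont : ContinuousOn (fun p : ℝ × ℝ × ℝ => dFn p.1 p.2.1 p.2.2) dDomain :=
    continuousOn_div_dslope_log.congr fun p ⟨hγ, hε, hμ⟩ => dFn_eq_div_dslope_log hγ.2
      (one_sub_mul_mul_pos (Ioc_subset_Icc_self hγ) (Ico_subset_Icc_self hε) hμ.2).ne'
  exact ⟨hcont, fun ε hε μ hμ => ⟨if_neg (lt_irrefl 1), hcont _ ⟨⟨one_pos, le_rfl⟩, hε, hμ⟩⟩⟩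
end

section
/- Fix μ ∈ (0,1). For every Δ > 0 there exist γ̄ ∈ (0,1) and ε̄ ∈ (0,1) such that for all γ ∈ (γ̄, 1) and all ε ∈ (0, ε̄), there exist μ̂ ∈ (0,1) and K ∈ ℕ with μ̂ = 1 - β(γ,ε,μ̂)^K and |μ̂ - μ| < Δ. (That is, as (γ,ε) → (1,0), any cooperator share in (0,1) can be approximated arbitrarily well by a feasible steady-state cooperator share of some GrimK strategy, despite K being restricted to integers.) -/
/-!
With `L(x) = grimExponent γ ε x = log (1 - x) / log β(γ, ε, x)`, a share `x` is feasible for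
GrimK when `L(x) = K`. Since `1 - β = (1 - γ) / (1 - γ (1 - ε) x)` and `log β ∼ β - 1` as
`β → 1`, the rescaled exponent `(1 - γ) L(x)` tends to `-(1 - x) log (1 - x)` as
`(γ, ε) → (1, 0)`. This limit is strictly concave, hence not constant near `μ`: it takes
different values at `μ` and at some nearby `a`. Then `|L(μ) - L(a)|` grows like `1 / (1 - γ)`,
so it eventually exceeds `1`, and by the intermediate value theorem `L` hits an integer between
`a` and `μ`.
-/

open Real Set Filter Topology

noncomputable def grimExponent (γ ε x : ℝ) : ℝ := log (1 - x) / log (betaFn γ ε x)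

section GrimExponent

variable {γ ε x : ℝ}

theorem one_sub_betaFn (hD : 1 - γ * (1 - ε) * x ≠ 0) :
    1 - betaFn γ ε x = (1 - γ) / (1 - γ * (1 - ε) * x) := by
  rw [betaFn]
  field_simp
  ring

theorem betaFn_mem_Ioo (hγ : γ ∈ Ioo (0:ℝ) 1) (hε : ε ∈ Ioo (0:ℝ) 1) (hx : x ∈ Ioo (0:ℝ) 1) :
    betaFn γ ε x ∈ Ioo (0:ℝ) 1 := by
  obtain ⟨hγ0, hγ1⟩ := hγ
  obtain ⟨hε0, hε1⟩ := hε
  obtain ⟨hx0, hx1⟩ := hx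
  have hN : 0 < 1 - (1 - ε) * x := by nlinarith
  have hD : 0 < 1 - γ * (1 - ε) * x := by nlinarith [mul_pos hγ0 hN]
  refine ⟨div_pos (by positivity) hD, ?_⟩
  rw [betaFn, div_lt_one hD]
  nlinarith

theorem grimExponent_pos (hγ : γ ∈ Ioo (0:ℝ) 1) (hε : ε ∈ Ioo (0:ℝ) 1) (hx : x ∈ Ioo (0:ℝ) 1) :
    0 < grimExponent γ ε x := by
  obtain ⟨hβ0, hβ1⟩ := betaFn_mem_Ioo hγ hε hx
  exact div_pos_of_neg_of_neg (log_neg (by linarith [hx.2]) (by linarith [hx.1]))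
    (log_neg hβ0 hβ1)

theorem eq_one_sub_betaFn_pow_of_grimExponent_eq (hγ : γ ∈ Ioo (0:ℝ) 1)
    (hε : ε ∈ Ioo (0:ℝ) 1) (hx : x ∈ Ioo (0:ℝ) 1) {K : ℕ} (hK : grimExponent γ ε x = K) :
    x = 1 - betaFn γ ε x ^ K := by
  obtain ⟨hβ0, hβ1⟩ := betaFn_mem_Ioo hγ hε hx
  have hlog : log (1 - x) = log (betaFn γ ε x ^ K) := by
    rw [log_pow, ← hK, grimExponent, div_mul_cancel₀ _ (log_neg hβ0 hβ1).ne]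
  have := log_injOn_pos (by simpa using hx.2) (pow_pos hβ0 K) hlog
  linarith

theorem continuousOn_grimExponent (hγ : γ ∈ Ioo (0:ℝ) 1) (hε : ε ∈ Ioo (0:ℝ) 1) :
    ContinuousOn (grimExponent γ ε) (Ioo 0 1) := by
  intro x hx
  obtain ⟨hβ0, hβ1⟩ := betaFn_mem_Ioo hγ hε hx
  have hD : 1 - γ * (1 - ε) * x ≠ 0 := by
    intro h
    simp [betaFn, h] at hβ0
  have hβ : ContinuousAt (betaFn γ ε) x := by
    unfold betaFn
    exact (by fun_prop : Continuous fun y : ℝ => γ * (1 - (1 - ε) * y)).continuousAt.div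
      (by fun_prop) hD
  refine ContinuousAt.continuousWithinAt ?_
  have hlog : ContinuousAt (fun y : ℝ => log (1 - y)) x :=
    ContinuousAt.log (by fun_prop) (sub_pos.2 hx.2).ne'
  exact hlog.div (hβ.log hβ0.ne') (log_neg hβ0 hβ1).ne

end GrimExponent

theorem tendsto_slope_log_one : Tendsto (fun t => log t / (t - 1)) (𝓝[≠] 1) (𝓝 1) := by
  have := hasDerivAt_iff_tendsto_slope.1 (hasDerivAt_log one_ne_zero)
  rw [inv_one] at this
  refine this.congr fun t => ?_
  rw [slope_def_field, log_one, sub_zero]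

theorem tendsto_one_sub_mul_grimExponent {x : ℝ} (hx : x ≠ 1) :
    Tendsto (fun p : ℝ × ℝ => (1 - p.1) * grimExponent p.1 p.2 x) (𝓝[≠] 1 ×ˢ 𝓝 0)
      (𝓝 (negMulLog (1 - x))) := by
  have hle : 𝓝[≠] (1:ℝ) ×ˢ 𝓝 (0:ℝ) ≤ 𝓝 ((1:ℝ), (0:ℝ)) := by
    rw [nhds_prod_eq]
    exact prod_mono nhdsWithin_le_nhds le_rfl
  set D : ℝ × ℝ → ℝ := fun p => 1 - p.1 * (1 - p.2) * x
  have hD1 : D (1, 0) ≠ 0 := by simpa [D] using sub_ne_zero.2 hx.symm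
  have hD : Tendsto D (𝓝[≠] 1 ×ˢ 𝓝 0) (𝓝 (1 - x)) := by
    simpa [D] using ((by fun_prop : Continuous D).tendsto (1, 0)).mono_left hle
  have hD0 : ∀ᶠ p in 𝓝[≠] 1 ×ˢ 𝓝 0, D p ≠ 0 := hD.eventually_ne (sub_ne_zero.2 hx.symm)
  have hγ : ∀ᶠ p : ℝ × ℝ in 𝓝[≠] 1 ×ˢ 𝓝 0, p.1 ≠ 1 := tendsto_fst.eventually self_mem_nhdsWithin
  have hβ : Tendsto (fun p : ℝ × ℝ => betaFn p.1 p.2 x) (𝓝[≠] 1 ×ˢ 𝓝 0) (𝓝[≠] 1) := by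
    refine tendsto_nhdsWithin_iff.2 ⟨?_, ?_⟩
    · have hcont : ContinuousAt (fun p : ℝ × ℝ => betaFn p.1 p.2 x) (1, 0) := by
        unfold betaFn
        exact ContinuousAt.div (by fun_prop) (by fun_prop) hD1
      have h1 : betaFn 1 0 x = 1 := by
        simpa [betaFn] using div_self (sub_ne_zero.2 hx.symm)
      simpa [h1] using hcont.tendsto.mono_left hle
    · filter_upwards [hD0, hγ] with p hp hp1
      rw [mem_compl_singleton_iff, ← sub_ne_zero, ← neg_ne_zero, neg_sub, one_sub_betaFn hp]
      exact div_ne_zero (sub_ne_zero.2 hp1.symm) hp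
  -- `(1 - γ) L = -D log (1 - x) / (log β / (β - 1))`, because `1 - γ = D (1 - β)`.
  have hlim := ((hD.neg.mul_const (log (1 - x))).div (tendsto_slope_log_one.comp hβ) one_ne_zero)
  rw [div_one, neg_mul, ← neg_mul] at hlim
  rw [negMulLog]
  refine hlim.congr' ?_
  filter_upwards [hD0] with p hp
  have h1γ : 1 - p.1 = D p * (1 - betaFn p.1 p.2 x) := by
    rw [one_sub_betaFn hp, mul_div_cancel₀ _ hp]
  simp only [Pi.div_apply, Function.comp_apply, grimExponent, h1γ]
  field_simp
  ring

theorem exists_nat_mem_uIcc {s t : ℝ} (hs : 0 ≤ s) (ht : 0 ≤ t) (hst : 1 ≤ |t - s|) :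
    ∃ K : ℕ, (K : ℝ) ∈ uIcc s t := by
  refine ⟨⌈min s t⌉₊, Nat.le_ceil _, ?_⟩
  have := Nat.ceil_lt_add_one (le_min hs ht)
  linarith [max_sub_min_eq_abs s t]

theorem exists_eq_one_sub_betaFn_pow_of_one_le_abs {γ ε a b : ℝ} (hγ : γ ∈ Ioo (0:ℝ) 1)
    (hε : ε ∈ Ioo (0:ℝ) 1) (ha : a ∈ Ioo (0:ℝ) 1) (hb : b ∈ Ioo (0:ℝ) 1)
    (hab : 1 ≤ |grimExponent γ ε b - grimExponent γ ε a|) :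
    ∃ x ∈ uIcc a b, ∃ K : ℕ, x = 1 - betaFn γ ε x ^ K := by
  have hsub : uIcc a b ⊆ Ioo 0 1 := ordConnected_Ioo.uIcc_subset ha hb
  obtain ⟨K, hK⟩ :=
    exists_nat_mem_uIcc (grimExponent_pos hγ hε ha).le (grimExponent_pos hγ hε hb).le hab
  obtain ⟨x, hx, hxK⟩ := intermediate_value_uIcc ((continuousOn_grimExponent hγ hε).mono hsub) hK
  exact ⟨x, hx, K, eq_one_sub_betaFn_pow_of_grimExponent_eq hγ hε (hsub hx) hxK⟩

theorem eventually_exists_eq_one_sub_betaFn_pow {a b : ℝ} (ha : a ∈ Ioo (0:ℝ) 1)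
    (hb : b ∈ Ioo (0:ℝ) 1) (hab : negMulLog (1 - a) ≠ negMulLog (1 - b)) :
    ∀ᶠ p : ℝ × ℝ in 𝓝[<] 1 ×ˢ 𝓝[>] 0, ∃ x ∈ uIcc a b, ∃ K : ℕ, x = 1 - betaFn p.1 p.2 x ^ K := by
  have hF : 𝓝[<] (1:ℝ) ×ˢ 𝓝[>] (0:ℝ) ≤ 𝓝[≠] 1 ×ˢ 𝓝 0 :=
    prod_mono (nhdsWithin_mono _ fun _ h => ne_of_lt h) nhdsWithin_le_nhds
  set c := |negMulLog (1 - b) - negMulLog (1 - a)|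
  have hc : 0 < c := abs_pos.2 (sub_ne_zero.2 hab.symm)
  have hgap : ∀ᶠ p : ℝ × ℝ in 𝓝[<] 1 ×ˢ 𝓝[>] 0,
      c / 2 < |(1 - p.1) * grimExponent p.1 p.2 b - (1 - p.1) * grimExponent p.1 p.2 a| :=
    (((tendsto_one_sub_mul_grimExponent hb.2.ne).sub
      (tendsto_one_sub_mul_grimExponent ha.2.ne)).abs.mono_left hF).eventually
        (lt_mem_nhds (half_lt_self hc))
  have hsmall : ∀ᶠ p : ℝ × ℝ in 𝓝[<] 1 ×ˢ 𝓝[>] 0, 1 - p.1 < c / 2 := by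
    have h : Tendsto (fun p : ℝ × ℝ => 1 - p.1) (𝓝[<] 1 ×ˢ 𝓝[>] 0) (𝓝 (1 - 1)) :=
      tendsto_const_nhds.sub (tendsto_fst.mono_right nhdsWithin_le_nhds)
    rw [sub_self] at h
    exact h.eventually (gt_mem_nhds (half_pos hc))
  have hγ : ∀ᶠ p : ℝ × ℝ in 𝓝[<] 1 ×ˢ 𝓝[>] 0, p.1 ∈ Ioo (0:ℝ) 1 :=
    tendsto_fst.eventually (Ioo_mem_nhdsLT one_pos)
  have hε : ∀ᶠ p : ℝ × ℝ in 𝓝[<] 1 ×ˢ 𝓝[>] 0, p.2 ∈ Ioo (0:ℝ) 1 :=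
    tendsto_snd.eventually (Ioo_mem_nhdsGT one_pos)
  filter_upwards [hgap, hsmall, hγ, hε] with p hgap hsmall hγ hε
  refine exists_eq_one_sub_betaFn_pow_of_one_le_abs hγ hε ha hb ?_
  rw [← mul_sub, abs_mul, abs_of_pos (sub_pos.2 hγ.2)] at hgap
  by_contra! h
  nlinarith [sub_pos.2 hγ.2]

theorem exists_Ioo_forall_of_eventually_nhdsLT_one_prod_nhdsGT_zero {P : ℝ → ℝ → Prop}
    (h : ∀ᶠ p : ℝ × ℝ in 𝓝[<] 1 ×ˢ 𝓝[>] 0, P p.1 p.2) :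
    ∃ γbar ∈ Ioo (0:ℝ) 1, ∃ εbar ∈ Ioo (0:ℝ) 1, ∀ γ ∈ Ioo γbar 1, ∀ ε ∈ Ioo 0 εbar, P γ ε := by
  obtain ⟨pγ, hpγ, pε, hpε, hP⟩ := eventually_prod_iff.1 h
  obtain ⟨l, hl, hlγ⟩ := mem_nhdsLT_iff_exists_Ioo_subset.1 hpγ
  obtain ⟨u, hu, huε⟩ := mem_nhdsGT_iff_exists_Ioo_subset.1 hpε
  refine ⟨max l 2⁻¹, ⟨by positivity, max_lt hl (by norm_num)⟩, min u 2⁻¹,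
    ⟨lt_min hu (by norm_num), by norm_num⟩, fun γ hγ ε hε => hP (hlγ ⟨?_, hγ.2⟩) (huε ⟨hε.1, ?_⟩)⟩
  · exact (le_max_left _ _).trans_lt hγ.1
  · exact hε.2.trans_le (min_le_left _ _)

theorem exists_negMulLog_ne {t δ : ℝ} (hδ : 0 < δ) (htδ : δ ≤ t) :
    ∃ s ∈ Icc (t - δ) (t + δ), negMulLog s ≠ negMulLog t := by
  by_contra! h
  have hlt := strictConcaveOn_negMulLog.2 (sub_nonneg.2 htδ)
    (show 0 ≤ t + δ by linarith) (by linarith : t - δ ≠ t + δ)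
    (by norm_num : (0:ℝ) < 2⁻¹) (by norm_num : (0:ℝ) < 2⁻¹) (by norm_num)
  have hmid : (2⁻¹ : ℝ) • (t - δ) + (2⁻¹ : ℝ) • (t + δ) = t := by
    simp only [smul_eq_mul]
    ring
  rw [hmid, h _ ⟨le_rfl, by linarith⟩, h _ ⟨by linarith, le_rfl⟩, smul_eq_mul] at hlt
  linarith

theorem stmt_14 (μ : ℝ) (hμ : μ ∈ Set.Ioo (0:ℝ) 1) :
    ∀ Δ > (0:ℝ), ∃ γbar ∈ Set.Ioo (0:ℝ) 1, ∃ εbar ∈ Set.Ioo (0:ℝ) 1,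
      ∀ γ ∈ Set.Ioo γbar 1, ∀ ε ∈ Set.Ioo (0:ℝ) εbar,
        ∃ μhat ∈ Set.Ioo (0:ℝ) 1, ∃ K : ℕ,
          μhat = 1 - (betaFn γ ε μhat) ^ K ∧ |μhat - μ| < Δ := by
  intro Δ hΔ
  obtain ⟨δ, hδ, hδΔ, hδμ, hδμ'⟩ : ∃ δ > 0, δ < Δ ∧ δ < μ ∧ δ < 1 - μ := by
    obtain ⟨δ, hδ, hδm⟩ := exists_between (lt_min hΔ (lt_min hμ.1 (sub_pos.2 hμ.2)))
    simp only [lt_min_iff] at hδm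
    exact ⟨δ, hδ, hδm.1, hδm.2.1, hδm.2.2⟩
  obtain ⟨s, hs, hsμ⟩ := exists_negMulLog_ne hδ hδμ'.le
  have ha : 1 - s ∈ Ioo (0:ℝ) 1 := ⟨by linarith [hs.2], by linarith [hs.1]⟩
  have hne : negMulLog (1 - (1 - s)) ≠ negMulLog (1 - μ) := by rwa [sub_sub_cancel]
  obtain ⟨γbar, hγbar, εbar, hεbar, hfix⟩ :=
    exists_Ioo_forall_of_eventually_nhdsLT_one_prod_nhdsGT_zero
      (P := fun γ ε => ∃ x ∈ uIcc (1 - s) μ, ∃ K : ℕ, x = 1 - betaFn γ ε x ^ K)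
      (eventually_exists_eq_one_sub_betaFn_pow ha hμ hne)
  refine ⟨γbar, hγbar, εbar, hεbar, fun γ hγ ε hε => ?_⟩
  obtain ⟨x, hx, K, hxK⟩ := hfix γ hγ ε hε
  have hclose : |x - μ| ≤ δ := by
    rw [abs_sub_comm]
    exact (abs_sub_right_of_mem_uIcc hx).trans (abs_le.2 ⟨by linarith [hs.1], by linarith [hs.2]⟩)
  exact ⟨x, ordConnected_Ioo.uIcc_subset ha hμ hx, K, hxK, hclose.trans_lt hδΔ⟩
end

section
/- Fix an integer K ≥ 1 and γ, ε ∈ (0,1), and let F and D be as defined. Suppose x̲ ∈ D is a fixed point of F such that every fixed point y ∈ D of F satisfies x̲_k ≤ y_k for all k < K. Then for every x⁰ ∈ D with x⁰_k ≤ x̲_k for all k < K, the iterates x^{t+1} = F(x^t) converge to x̲ as t → ∞. (That is, if the initial record distribution is dominated by the least cooperative steady state, the record distribution converges to the least cooperative steady state.) -/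
/-- The set of monotone cumulative record distributions (only indices `< K` matter). -/
def grimD (K : ℕ) : Set (ℕ → ℝ) :=
  {x | 0 ≤ x 0 ∧ (∀ k, k + 1 < K → x k ≤ x (k + 1)) ∧ x (K - 1) ≤ 1}

/-- The GrimK one-period update map on cumulative record distributions. -/
def grimF (K : ℕ) (γ ε : ℝ) (x : ℕ → ℝ) : ℕ → ℝ := fun k =>
  if k = 0 then 1 - γ + γ * (1 - ε) * x (K - 1) * x 0
  else 1 - γ + γ * x (k - 1) + γ * (1 - ε) * x (K - 1) * (x k - x (k - 1))

/-!
With `a = (1 - ε) x_{K-1} ∈ [0, 1]` and `x_{-1} = 0`,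
`F(x)_k = 1 - γ + γ ((1 - a) x_{k-1} + a x_k)` is a convex combination of `1`, `x_{k-1}` and
`x_k`; hence `F` maps `D` to `D` and is monotone there for the componentwise order. So the iterates
of `0` increase and stay below every fixed point; by continuity of `F` their limit is a fixed point
in `D`, hence it is the least one `x̲`. An orbit starting below `x̲` is squeezed between these
iterates and `x̲`.
-/

open Filter Topology

lemma one_sub_mul_add_mul_le_one_sub_mul_add_mul {a b p q p' q' : ℝ}
    (ha : 0 ≤ a) (hab : a ≤ b) (hb : b ≤ 1) (hpq : p ≤ q) (hp : p ≤ p') (hq : q ≤ q') :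
    (1 - a) * p + a * q ≤ (1 - b) * p' + b * q' := by
  linarith [mul_nonneg (sub_nonneg.2 hb) (sub_nonneg.2 hp),
    mul_nonneg (ha.trans hab) (sub_nonneg.2 hq), mul_nonneg (sub_nonneg.2 hab) (sub_nonneg.2 hpq)]

def grimPrev (x : ℕ → ℝ) (k : ℕ) : ℝ := if k = 0 then 0 else x (k - 1)

@[simp]
lemma grimPrev_succ (x : ℕ → ℝ) (k : ℕ) : grimPrev x (k + 1) = x k := by
  simp [grimPrev]

lemma grimF_eq (K : ℕ) (γ ε : ℝ) (x : ℕ → ℝ) (k : ℕ) :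
    grimF K γ ε x k = 1 - γ + γ * ((1 - (1 - ε) * x (K - 1)) * grimPrev x k
      + (1 - ε) * x (K - 1) * x k) := by
  unfold grimF grimPrev
  split_ifs with hk
  · subst hk; ring
  · ring

namespace grimD

variable {K : ℕ} {x : ℕ → ℝ}

lemma apply_le_apply (hx : x ∈ grimD K) {i j : ℕ} (hij : i ≤ j) (hj : j < K) :
    x i ≤ x j := by
  induction j, hij using Nat.le_induction with
  | base => exact le_rfl
  | succ j _ ih => exact (ih (by omega)).trans (hx.2.1 j hj)

lemma nonneg (hx : x ∈ grimD K) : ∀ k < K, 0 ≤ x k := fun k hk =>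
  hx.1.trans (grimD.apply_le_apply hx (Nat.zero_le k) hk)

lemma le_one (hx : x ∈ grimD K) {k : ℕ} (hk : k < K) : x k ≤ 1 :=
  (grimD.apply_le_apply hx (Nat.le_sub_one_of_lt hk) (by omega)).trans hx.2.2

lemma grimPrev_nonneg (hx : x ∈ grimD K) {k : ℕ} (hk : k < K) : 0 ≤ grimPrev x k := by
  unfold grimPrev
  split_ifs
  exacts [le_rfl, grimD.nonneg hx _ (by omega)]

lemma grimPrev_le (hx : x ∈ grimD K) {k : ℕ} (hk : k < K) : grimPrev x k ≤ x k := by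
  unfold grimPrev
  split_ifs with h
  exacts [h ▸ hx.1, grimD.apply_le_apply hx (Nat.sub_le k 1) hk]

lemma weight_mem_Icc (hx : x ∈ grimD K) (hK : 1 ≤ K) {ε : ℝ}
    (hε : ε ∈ Set.Icc (0 : ℝ) 1) :
    (1 - ε) * x (K - 1) ∈ Set.Icc (0 : ℝ) 1 := by
  have h0 := grimD.nonneg hx _ (show K - 1 < K by omega)
  have h1 := hx.2.2
  constructor <;> nlinarith [hε.1, hε.2]

lemma zero_mem : (fun _ => (0 : ℝ)) ∈ grimD K :=
  ⟨le_rfl, fun _ _ => le_rfl, zero_le_one⟩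

end grimD

section GrimF

variable {K : ℕ} {γ ε : ℝ}

lemma mapsTo_grimF (hK : 1 ≤ K) (hγ : γ ∈ Set.Icc (0 : ℝ) 1)
    (hε : ε ∈ Set.Icc (0 : ℝ) 1) :
    Set.MapsTo (grimF K γ ε) (grimD K) (grimD K) := by
  intro x hx
  obtain ⟨ha0, ha1⟩ := grimD.weight_mem_Icc hx hK hε
  have hlast : K - 1 < K := by omega
  refine ⟨?_, fun k hk => ?_, ?_⟩
  · have := one_sub_mul_add_mul_le_one_sub_mul_add_mul le_rfl ha0 ha1 le_rfl
      (grimD.grimPrev_nonneg hx hK) (grimD.nonneg hx 0 hK)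
    rw [grimF_eq]
    linarith [mul_le_mul_of_nonneg_left this hγ.1, hγ.2]
  · have hprev := grimD.grimPrev_le hx (show k < K by omega)
    have := one_sub_mul_add_mul_le_one_sub_mul_add_mul ha0 le_rfl ha1 hprev hprev (hx.2.1 k hk)
    rw [grimF_eq, grimF_eq, grimPrev_succ]
    linarith [mul_le_mul_of_nonneg_left this hγ.1]
  · have hprev := grimD.grimPrev_le hx hlast
    have hone := grimD.le_one hx hlast
    have := one_sub_mul_add_mul_le_one_sub_mul_add_mul ha0 ha1 le_rfl hprev (hprev.trans hone) hone
    rw [grimF_eq]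
    linarith [mul_le_mul_of_nonneg_left this hγ.1]

lemma grimF_le_grimF (hK : 1 ≤ K) (hγ : 0 ≤ γ) (hε : ε ∈ Set.Icc (0 : ℝ) 1)
    {x y : ℕ → ℝ} (hx : x ∈ grimD K) (hy : y ∈ grimD K) (hxy : ∀ k < K, x k ≤ y k) :
    ∀ k < K, grimF K γ ε x k ≤ grimF K γ ε y k := by
  intro k hk
  have hlast : K - 1 < K := by omega
  have hprev : grimPrev x k ≤ grimPrev y k := by
    unfold grimPrev
    split_ifs
    exacts [le_rfl, hxy _ (by omega)]
  have := one_sub_mul_add_mul_le_one_sub_mul_add_mul (grimD.weight_mem_Icc hx hK hε).1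
    (mul_le_mul_of_nonneg_left (hxy _ hlast) (sub_nonneg.2 hε.2))
    (grimD.weight_mem_Icc hy hK hε).2 (grimD.grimPrev_le hx hk) hprev (hxy k hk)
  rw [grimF_eq, grimF_eq]
  linarith [mul_le_mul_of_nonneg_left this hγ]

lemma tendsto_grimF_apply (hK : 1 ≤ K) {ι : Type*} {l : Filter ι} {x : ι → ℕ → ℝ}
    {z : ℕ → ℝ} (hx : ∀ k < K, Tendsto (fun i => x i k) l (𝓝 (z k))) :
    ∀ k < K, Tendsto (fun i => grimF K γ ε (x i) k) l (𝓝 (grimF K γ ε z k)) := by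
  intro k hk
  have hweight := (hx (K - 1) (by omega)).const_mul (1 - ε)
  have hprev : Tendsto (fun i => grimPrev (x i) k) l (𝓝 (grimPrev z k)) := by
    unfold grimPrev
    split_ifs
    exacts [tendsto_const_nhds, hx _ (by omega)]
  simp only [grimF_eq]
  exact tendsto_const_nhds.add (tendsto_const_nhds.mul
    (((tendsto_const_nhds.sub hweight).mul hprev).add (hweight.mul (hx k hk))))

lemma mem_grimD_of_tendsto (hK : 1 ≤ K) {ι : Type*} {l : Filter ι} [l.NeBot]
    {x : ι → ℕ → ℝ} {z : ℕ → ℝ} (hmem : ∀ i, x i ∈ grimD K)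
    (hx : ∀ k < K, Tendsto (fun i => x i k) l (𝓝 (z k))) :
    z ∈ grimD K :=
  ⟨ge_of_tendsto' (hx 0 hK) fun i => (hmem i).1,
    fun k hk => le_of_tendsto_of_tendsto' (hx k (by omega)) (hx (k + 1) hk)
      fun i => (hmem i).2.1 k hk,
    le_of_tendsto' (hx (K - 1) (by omega)) fun i => (hmem i).2.2⟩

end GrimF

section Iterate

variable {K : ℕ} {γ ε : ℝ} (hK : 1 ≤ K) (hγ : γ ∈ Set.Icc (0 : ℝ) 1)
  (hε : ε ∈ Set.Icc (0 : ℝ) 1)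
include hK hγ hε

lemma grimF_iterate_le_iterate {x y : ℕ → ℝ} (hx : x ∈ grimD K) (hy : y ∈ grimD K)
    (hxy : ∀ k < K, x k ≤ y k) (t : ℕ) :
    ∀ k < K, (grimF K γ ε)^[t] x k ≤ (grimF K γ ε)^[t] y k := by
  induction t with
  | zero => exact hxy
  | succ t ih =>
    simp only [Function.iterate_succ_apply']
    exact grimF_le_grimF hK hγ.1 hε ((mapsTo_grimF hK hγ hε).iterate t hx)
      ((mapsTo_grimF hK hγ hε).iterate t hy) ih

lemma grimF_iterate_le_of_fixed {x p : ℕ → ℝ} (hx : x ∈ grimD K) (hp : p ∈ grimD K)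
    (hfix : ∀ k < K, grimF K γ ε p k = p k) (hxp : ∀ k < K, x k ≤ p k) (t : ℕ) :
    ∀ k < K, (grimF K γ ε)^[t] x k ≤ p k := by
  induction t with
  | zero => exact hxp
  | succ t ih =>
    intro k hk
    rw [Function.iterate_succ_apply', ← hfix k hk]
    exact grimF_le_grimF hK hγ.1 hε ((mapsTo_grimF hK hγ hε).iterate t hx) hp ih k hk

lemma monotone_grimF_iterate_zero {k : ℕ} (hk : k < K) :
    Monotone fun t => (grimF K γ ε)^[t] (fun _ => 0) k := by
  refine monotone_nat_of_le_succ fun t => ?_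
  rw [Function.iterate_succ_apply]
  exact grimF_iterate_le_iterate hK hγ hε grimD.zero_mem (mapsTo_grimF hK hγ hε grimD.zero_mem)
    (grimD.nonneg (mapsTo_grimF hK hγ hε grimD.zero_mem)) t k hk

theorem tendsto_grimF_iterate_zero {xlow : ℕ → ℝ} (hxlow : xlow ∈ grimD K)
    (hfix : ∀ k < K, grimF K γ ε xlow k = xlow k)
    (hmin : ∀ y ∈ grimD K, (∀ k < K, grimF K γ ε y k = y k) → ∀ k < K, xlow k ≤ y k) :
    ∀ k < K, Tendsto (fun t => (grimF K γ ε)^[t] (fun _ => 0) k) atTop (𝓝 (xlow k)) := by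
  set b : ℕ → ℕ → ℝ := fun t => (grimF K γ ε)^[t] (fun _ => 0)
  have hbD (t : ℕ) : b t ∈ grimD K := (mapsTo_grimF hK hγ hε).iterate t grimD.zero_mem
  have hble (t : ℕ) : ∀ k < K, b t k ≤ xlow k :=
    grimF_iterate_le_of_fixed hK hγ hε grimD.zero_mem hxlow hfix (grimD.nonneg hxlow) t
  have hbdd {k : ℕ} (hk : k < K) : BddAbove (Set.range fun t => b t k) :=
    ⟨xlow k, Set.forall_mem_range.2 fun t => hble t k hk⟩
  set z : ℕ → ℝ := fun k => ⨆ t, b t k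
  have hbz : ∀ k < K, Tendsto (fun t => b t k) atTop (𝓝 (z k)) := fun k hk =>
    tendsto_atTop_ciSup (monotone_grimF_iterate_zero hK hγ hε hk) (hbdd hk)
  have hzD : z ∈ grimD K := mem_grimD_of_tendsto hK hbD hbz
  have hzfix : ∀ k < K, grimF K γ ε z k = z k := fun k hk =>
    tendsto_nhds_unique (tendsto_grimF_apply hK hbz k hk) <| by
      simpa only [Function.comp_def, b, Function.iterate_succ_apply'] using
        (hbz k hk).comp (tendsto_add_atTop_nat 1)
  intro k hk
  have hzx : z k = xlow k :=
    le_antisymm (ciSup_le fun t => hble t k hk) (hmin z hzD hzfix k hk)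
  exact hzx ▸ hbz k hk

end Iterate

theorem stmt_17 (K : ℕ) (hK : 1 ≤ K) (γ ε : ℝ)
    (hγ : γ ∈ Set.Ioo (0:ℝ) 1) (hε : ε ∈ Set.Ioo (0:ℝ) 1)
    (xlow : ℕ → ℝ) (hxlow : xlow ∈ grimD K)
    (hfix : ∀ k < K, grimF K γ ε xlow k = xlow k)
    (hmin : ∀ y ∈ grimD K, (∀ k < K, grimF K γ ε y k = y k) → ∀ k < K, xlow k ≤ y k)
    (x0 : ℕ → ℝ) (hx0 : x0 ∈ grimD K) (hdom : ∀ k < K, x0 k ≤ xlow k)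
    (seq : ℕ → ℕ → ℝ) (hseq0 : seq 0 = x0)
    (hseq : ∀ t, seq (t + 1) = grimF K γ ε (seq t)) :
    ∀ k < K, Filter.Tendsto (fun t => seq t k) Filter.atTop (nhds (xlow k)) := by
  have hγ' := Set.Ioo_subset_Icc_self hγ
  have hε' := Set.Ioo_subset_Icc_self hε
  have hseq_eq : seq = fun t => (grimF K γ ε)^[t] x0 := by
    funext t
    induction t with
    | zero => exact hseq0
    | succ t ih => rw [hseq, ih, Function.iterate_succ_apply']
  intro k hk
  subst hseq_eq
  exact tendsto_of_tendsto_of_tendsto_of_le_of_le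
    (tendsto_grimF_iterate_zero hK hγ' hε' hxlow hfix hmin k hk) tendsto_const_nhds
    (fun t => grimF_iterate_le_iterate hK hγ' hε' grimD.zero_mem hx0 (grimD.nonneg hx0) t k hk)
    (fun t => grimF_iterate_le_of_fixed hK hγ' hε' hx0 hxlow hfix hdom t k hk)
end
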